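/- Let D ∈ {0,1}, S ∈ {0,1}, Ỹ real-valued, with monotone selection meaning that conditional on {D=1, S=1} the population is a mixture of an 'always-observed' group (weight 1−q) and a 'treatment-induced' group (weight q), where q = P(S(1)=1, S(0)=0 | D=1, S=1). Let F be the conditional CDF of Ỹ given {D=1, S=1}, with quantiles ỹ_q and ỹ_{1−q}, and assume F is continuous. Then E[Ỹ | D=1, S=1, Ỹ ≤ ỹ_{1−q}] ≤ E[Ỹ | D=1, S=1, always-observed] ≤ E[Ỹ | D=1, S=1, Ỹ ≥ ỹ_q]. -/

import Mathlib

open MeasureTheory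

/-- Key comparison for the upper tail: if `μ ≤ ν` then the centered integral of
`id` under `μ` is at most the centered integral over `Ici t` under `ν`. -/
lemma lee_aux_Ici (μ ν : Measure ℝ) [IsFiniteMeasure ν] (hle : μ ≤ ν)
    (hint : Integrable (fun x : ℝ => x) ν) (t : ℝ) :
    (∫ x, x ∂μ) - t * (μ Set.univ).toReal
      ≤ (∫ x in Set.Ici t, x ∂ν) - t * (ν (Set.Ici t)).toReal := by
  haveI : IsFiniteMeasure μ := ⟨lt_of_le_of_lt (hle Set.univ) (measure_lt_top ν _)⟩
  have hμint : Integrable (fun x : ℝ => x) μ := hint.mono_measure hle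
  have hg_int_μ : Integrable (fun x : ℝ => x - t) μ := hμint.sub (integrable_const t)
  have hg_int_ν : Integrable (fun x : ℝ => x - t) ν := hint.sub (integrable_const t)
  have hA : MeasurableSet (Set.Ici t) := measurableSet_Ici
  have h1 : (∫ x, (x - t) ∂μ)
      = (∫ x in Set.Ici t, (x - t) ∂μ) + ∫ x in (Set.Ici t)ᶜ, (x - t) ∂μ :=
    (integral_add_compl hA hg_int_μ).symm
  have h2 : (∫ x in (Set.Ici t)ᶜ, (x - t) ∂μ) ≤ 0 := by
    apply setIntegral_nonpos hA.compl
    intro x hx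
    simp only [Set.mem_compl_iff, Set.mem_Ici, not_le] at hx
    linarith
  have h3 : (∫ x in Set.Ici t, (x - t) ∂μ) ≤ ∫ x in Set.Ici t, (x - t) ∂ν := by
    apply integral_mono_measure (Measure.restrict_mono' (ae_of_all _ fun a => le_rfl) hle)
    · filter_upwards [ae_restrict_mem hA] with x hx
      simp only [Set.mem_Ici] at hx
      simpa using sub_nonneg.mpr hx
    · exact hg_int_ν.restrict
  have key : (∫ x, (x - t) ∂μ) ≤ ∫ x in Set.Ici t, (x - t) ∂ν := by
    calc (∫ x, (x - t) ∂μ) ≤ (∫ x in Set.Ici t, (x - t) ∂μ) := by linarith [h1, h2]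
    _ ≤ _ := h3
  have e1 : (∫ x, (x - t) ∂μ) = (∫ x, x ∂μ) - t * (μ Set.univ).toReal := by
    rw [integral_sub hμint (integrable_const t), integral_const]
    simp [mul_comm, smul_eq_mul, measureReal_def]
  have e2 : (∫ x in Set.Ici t, (x - t) ∂ν)
      = (∫ x in Set.Ici t, x ∂ν) - t * (ν (Set.Ici t)).toReal := by
    rw [integral_sub hint.restrict (integrable_const t), integral_const]
    simp [Measure.restrict_apply_univ, mul_comm, smul_eq_mul, measureReal_def]
  linarith [key, e1.symm.le, e2.le]

/-- Key comparison for the lower tail. -/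
lemma lee_aux_Iic (μ ν : Measure ℝ) [IsFiniteMeasure ν] (hle : μ ≤ ν)
    (hint : Integrable (fun x : ℝ => x) ν) (t : ℝ) :
    (∫ x in Set.Iic t, x ∂ν) - t * (ν (Set.Iic t)).toReal
      ≤ (∫ x, x ∂μ) - t * (μ Set.univ).toReal := by
  haveI : IsFiniteMeasure μ := ⟨lt_of_le_of_lt (hle Set.univ) (measure_lt_top ν _)⟩
  have hμint : Integrable (fun x : ℝ => x) μ := hint.mono_measure hle
  have hg_int_μ : Integrable (fun x : ℝ => t - x) μ := (integrable_const t).sub hμint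
  have hg_int_ν : Integrable (fun x : ℝ => t - x) ν := (integrable_const t).sub hint
  have hA : MeasurableSet (Set.Iic t) := measurableSet_Iic
  have h1 : (∫ x, (t - x) ∂μ)
      = (∫ x in Set.Iic t, (t - x) ∂μ) + ∫ x in (Set.Iic t)ᶜ, (t - x) ∂μ :=
    (integral_add_compl hA hg_int_μ).symm
  have h2 : (∫ x in (Set.Iic t)ᶜ, (t - x) ∂μ) ≤ 0 := by
    apply setIntegral_nonpos hA.compl
    intro x hx
    simp only [Set.mem_compl_iff, Set.mem_Iic, not_le] at hx
    linarith
  have h3 : (∫ x in Set.Iic t, (t - x) ∂μ) ≤ ∫ x in Set.Iic t, (t - x) ∂ν := by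
    apply integral_mono_measure (Measure.restrict_mono' (ae_of_all _ fun a => le_rfl) hle)
    · filter_upwards [ae_restrict_mem hA] with x hx
      simp only [Set.mem_Iic] at hx
      simpa using sub_nonneg.mpr hx
    · exact hg_int_ν.restrict
  have key : (∫ x, (t - x) ∂μ) ≤ ∫ x in Set.Iic t, (t - x) ∂ν := by
    calc (∫ x, (t - x) ∂μ) ≤ (∫ x in Set.Iic t, (t - x) ∂μ) := by linarith [h1, h2]
    _ ≤ _ := h3
  have e1 : (∫ x, (t - x) ∂μ) = t * (μ Set.univ).toReal - (∫ x, x ∂μ) := by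
    rw [integral_sub (integrable_const t) hμint, integral_const]
    simp [mul_comm, smul_eq_mul, measureReal_def]
  have e2 : (∫ x in Set.Iic t, (t - x) ∂ν)
      = t * (ν (Set.Iic t)).toReal - (∫ x in Set.Iic t, x ∂ν) := by
    rw [integral_sub (integrable_const t) hint.restrict, integral_const]
    simp [Measure.restrict_apply_univ, mul_comm, smul_eq_mul, measureReal_def]
  linarith [key, e1.symm.le, e2.le]

/-- Lee trimming bounds: if the conditional distribution `ν` of `Ỹ` given
`{D = 1, S = 1}` is a mixture `ν = (1−q)·ν_AO + q·ν_IN` of the always-observed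
component `ν_AO` (weight `1−q`) and the treatment-induced component `ν_IN`
(weight `q`), `ν` is continuous (atomless), and `ỹ_q`, `ỹ_{1−q}` are the `q`-
and `(1−q)`-quantiles of `ν`, then the always-observed mean is bounded below by
the mean of the lowest `1−q` fraction of `ν` and above by the mean of the
highest `1−q` fraction of `ν`. -/
theorem stmt11 (q : ℝ) (hq0 : 0 ≤ q) (hq1 : q < 1)
    (ν νAO νIN : Measure ℝ)
    [IsProbabilityMeasure ν] [IsProbabilityMeasure νAO] [IsProbabilityMeasure νIN]
    (hmix : ν = ENNReal.ofReal (1 - q) • νAO + ENNReal.ofReal q • νIN)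
    (hcont : ∀ x : ℝ, ν {x} = 0)
    (hint : Integrable (fun x : ℝ => x) ν)
    (yq y1q : ℝ)
    (hyq : ν (Set.Iic yq) = ENNReal.ofReal q)
    (hy1q : ν (Set.Iic y1q) = ENNReal.ofReal (1 - q)) :
    (∫ x in Set.Iic y1q, x ∂ν) / (1 - q) ≤ ∫ x, x ∂νAO ∧
    ∫ x, x ∂νAO ≤ (∫ x in Set.Ici yq, x ∂ν) / (1 - q) := by
  have h1q : (0:ℝ) < 1 - q := by linarith
  set μ : Measure ℝ := ENNReal.ofReal (1 - q) • νAO with hμ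
  have hle : μ ≤ ν := by
    rw [hmix]; exact Measure.le_add_right le_rfl
  have hμuniv : μ Set.univ = ENNReal.ofReal (1 - q) := by
    simp [hμ, Measure.smul_apply, smul_eq_mul]
  have hμunivR : (μ Set.univ).toReal = 1 - q := by
    rw [hμuniv, ENNReal.toReal_ofReal h1q.le]
  have hμint : (∫ x, x ∂μ) = (1 - q) * ∫ x, x ∂νAO := by
    rw [hμ, integral_smul_measure, ENNReal.toReal_ofReal h1q.le, smul_eq_mul]
  have hνIci : ν (Set.Ici yq) = ENNReal.ofReal (1 - q) := by
    have h0 : ν (Set.Ici yq) = ν (Set.Ioi yq) := by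
      have : Set.Ici yq = {yq} ∪ Set.Ioi yq := by
        ext x; simp [le_iff_lt_or_eq, or_comm, eq_comm]
      refine le_antisymm ?_ (measure_mono Set.Ioi_subset_Ici_self)
      rw [this]
      calc ν ({yq} ∪ Set.Ioi yq) ≤ ν {yq} + ν (Set.Ioi yq) := measure_union_le _ _
      _ = ν (Set.Ioi yq) := by rw [hcont]; simp
    have h2 : ν (Set.Ioi yq) = 1 - ν (Set.Iic yq) := by
      rw [← Set.compl_Iic]
      rw [measure_compl measurableSet_Iic (measure_ne_top ν _)]
      simp
    rw [h0, h2, hyq]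
    rw [← ENNReal.ofReal_one, ← ENNReal.ofReal_sub _ hq0]
  -- lower bound
  have hlow := lee_aux_Iic μ ν hle hint y1q
  rw [hy1q, ENNReal.toReal_ofReal h1q.le, hμunivR, hμint] at hlow
  have hup := lee_aux_Ici μ ν hle hint yq
  rw [hνIci, ENNReal.toReal_ofReal h1q.le, hμunivR, hμint] at hup
  constructor
  · rw [div_le_iff₀ h1q]; linarith
  · rw [le_div_iff₀ h1q]; linarith
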